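/- Let V ∈ L³(ℝ³) be nonnegative, radial, supported in {|x| ≤ R}, and let f solve the scattering-type equation with 0 ≤ f ≤ 1. Define m(r) = r f(r) and suppose −m''(r) + (1/2)V(r)m(r) = λ m(r) on (0, L] with m(0) = 0. Then for r ∈ (0, R], |f'(r)| = (1/r²)|∫_0^r s m''(s) ds| ≤ C(‖V‖_3 + λ) for a constant C independent of r, where one uses f'(r) = (m'(r)r − m(r))/r² and integration by parts. -/

import Mathlib

/-!
With `m = t f` and `q = m'' = ½ V m - λ m`, the product rule gives `f' = (r m' - m) / r²`, and
`(r m' - m)' = r q`. The potential enters only through `s² |V(s)|³`, which by polar coordinates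
is integrable on `(0, ∞)` with integral `‖V‖₃³ / 4π`. The elementary inequality
`w ≤ K + w³ / K²` with `K = s^{-1/2}` makes `s |V(s)|`, hence `q`, integrable near `0`; so `m'` has
a limit at `0⁺`, `r m' - m → 0`, and `r m'(r) - m(r) = ∫₀ʳ s q`. Since `0 ≤ m(s) ≤ s`,
`|s q| ≤ ½ s² |V| + λ s²`, and the same inequality with `K ≈ A / r` is Hölder's bound
`∫₀ʳ s² |V| ≤ (4/3) A r²` for `A = (4π)^{-1/3} ‖V‖₃`. Dividing by `r²`,
`|f'(r)| ≤ (2/3) A + λ R / 3`.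
-/

open MeasureTheory Set Metric Module Filter Topology

section RadialProfile

variable {E : Type*} [NormedAddCommGroup E] [NormedSpace ℝ E] [MeasurableSpace E] [BorelSpace E]
  {V : E → ℝ} {Vr : ℝ → ℝ}

lemma aestronglyMeasurable_radialProfile [Nontrivial E] (hV : Measurable V)
    (hVrad : ∀ x, V x = Vr ‖x‖) : AEStronglyMeasurable Vr (volume.restrict (Ioi 0)) := by
  obtain ⟨e, he⟩ := exists_norm_eq E zero_le_one
  refine (hV.comp (measurable_id.smul_const e)).aestronglyMeasurable.congr ?_
  filter_upwards [ae_restrict_mem measurableSet_Ioi] with s hs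
  simp [hVrad, norm_smul, he, abs_of_pos (mem_Ioi.1 hs)]

variable [FiniteDimensional ℝ E] [Nontrivial E] (μ : Measure E) [μ.IsAddHaarMeasure]
  {n : ℕ}

lemma integrableOn_radialProfile_pow (hVrad : ∀ x, V x = Vr ‖x‖) (hn : n ≠ 0)
    (hV : MemLp V n μ) :
    IntegrableOn (fun y ↦ y ^ (finrank ℝ E - 1) * |Vr y| ^ n) (Ioi 0) := by
  have h := hV.integrable_norm_pow hn
  simp only [hVrad, Real.norm_eq_abs] at h
  simpa using (integrable_fun_norm_addHaar μ (f := fun y ↦ |Vr y| ^ n)).1 h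

lemma integral_radialProfile_pow (hVrad : ∀ x, V x = Vr ‖x‖) (hn : n ≠ 0)
    (hV : MemLp V n μ) :
    finrank ℝ E * μ.real (ball 0 1) * ∫ y in Ioi 0, y ^ (finrank ℝ E - 1) * |Vr y| ^ n =
      (eLpNorm V n μ).toReal ^ n := by
  rw [hV.eLpNorm_eq_integral_rpow_norm (by simpa) (by simp),
    ENNReal.toReal_ofReal (by positivity), ENNReal.toReal_natCast,
    Real.rpow_inv_natCast_pow (integral_nonneg fun _ ↦ by positivity) hn]
  simp only [Real.rpow_natCast, hVrad, Real.norm_eq_abs]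
  rw [integral_fun_norm_addHaar μ (fun y ↦ |Vr y| ^ n), nsmul_eq_mul, smul_eq_mul, mul_assoc]
  simp [smul_eq_mul]

end RadialProfile

lemma measureReal_ball_pos {X : Type*} [PseudoMetricSpace X] [ProperSpace X] [MeasurableSpace X]
    (μ : Measure X) [μ.IsOpenPosMeasure] [IsFiniteMeasureOnCompacts μ] (x : X) {r : ℝ}
    (hr : 0 < r) : 0 < μ.real (ball x r) :=
  ENNReal.toReal_pos (measure_ball_pos μ x hr).ne' measure_ball_lt_top.ne

/-- `(4π)^{-1/3}`, as `3 |B₁|` is the area of the unit sphere of `ℝ³`. -/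
noncomputable def radialL3Const : ℝ :=
  (3 * volume.real (ball (0 : EuclideanSpace ℝ (Fin 3)) 1))⁻¹ ^ ((3 : ℕ)⁻¹ : ℝ)

lemma radialL3Const_pos : 0 < radialL3Const := by
  have := measureReal_ball_pos (volume : Measure (EuclideanSpace ℝ (Fin 3))) 0 one_pos
  unfold radialL3Const
  positivity

section EuclideanThree

variable {V : EuclideanSpace ℝ (Fin 3) → ℝ} {Vr : ℝ → ℝ}

lemma integrableOn_sq_mul_abs_pow_three_of_memLp (hVrad : ∀ x, V x = Vr ‖x‖)
    (hV : MemLp V 3 volume) : IntegrableOn (fun s ↦ s ^ 2 * |Vr s| ^ 3) (Ioi 0) := by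
  simpa [finrank_euclideanSpace_fin] using
    integrableOn_radialProfile_pow volume hVrad three_ne_zero (by exact_mod_cast hV)

lemma setIntegral_sq_mul_abs_pow_three_le (hVrad : ∀ x, V x = Vr ‖x‖) (hV : MemLp V 3 volume)
    (r : ℝ) : ∫ s in Ioc 0 r, s ^ 2 * |Vr s| ^ 3 ≤
      (radialL3Const * (eLpNorm V 3 volume).toReal) ^ 3 := by
  have hrad := integral_radialProfile_pow volume hVrad three_ne_zero (by exact_mod_cast hV)
  norm_num [finrank_euclideanSpace_fin] at hrad
  have hv := measureReal_ball_pos (volume : Measure (EuclideanSpace ℝ (Fin 3))) 0 one_pos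
  calc ∫ s in Ioc 0 r, s ^ 2 * |Vr s| ^ 3 ≤ ∫ s in Ioi 0, s ^ 2 * |Vr s| ^ 3 :=
        setIntegral_mono_set (integrableOn_sq_mul_abs_pow_three_of_memLp hVrad hV)
          (ae_of_all _ fun _ ↦ by positivity) Ioc_subset_Ioi_self.eventuallyLE
    _ = (radialL3Const * (eLpNorm V 3 volume).toReal) ^ 3 := by
        rw [mul_pow, radialL3Const, Real.rpow_inv_natCast_pow (by positivity) three_ne_zero,
          ← hrad]
        field_simp

end EuclideanThree

section WeightedCube

variable {w : ℝ → ℝ} {r : ℝ}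

lemma le_add_pow_three_div_sq {K x : ℝ} (hK : 0 < K) (hx : 0 ≤ x) :
    x ≤ K + x ^ 3 / K ^ 2 := by
  rcases le_or_gt x K with h | h
  · have : 0 ≤ x ^ 3 / K ^ 2 := by positivity
    linarith
  · have : x ≤ x ^ 3 / K ^ 2 := by
      rw [le_div_iff₀ (by positivity)]
      nlinarith [mul_le_mul_of_nonneg_left (pow_le_pow_left₀ hK.le h.le 2) hx]
    linarith

lemma integrableOn_mul_of_integrableOn_sq_mul_pow_three (hw : 0 ≤ w)
    (hwm : AEStronglyMeasurable w (volume.restrict (Ioc 0 r)))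
    (hw3 : IntegrableOn (fun s ↦ s ^ 2 * w s ^ 3) (Ioc 0 r)) :
    IntegrableOn (fun s ↦ s * w s) (Ioc 0 r) := by
  refine Integrable.mono' (Real.continuous_sqrt.integrableOn_Ioc.add hw3)
    (aestronglyMeasurable_id.mul hwm) ?_
  filter_upwards [ae_restrict_mem measurableSet_Ioc] with s hs
  replace hs : 0 < s := hs.1
  have hsqrt : 0 < √s := Real.sqrt_pos.2 hs
  rw [Real.norm_of_nonneg (mul_nonneg hs.le (hw s))]
  calc s * w s ≤ s * ((√s)⁻¹ + w s ^ 3 / (√s)⁻¹ ^ 2) :=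
        mul_le_mul_of_nonneg_left (le_add_pow_three_div_sq (inv_pos.2 hsqrt) (hw s)) hs.le
    _ = √s + s ^ 2 * w s ^ 3 := by
        rw [inv_pow, Real.sq_sqrt hs.le]
        field_simp
        linear_combination -Real.mul_self_sqrt hs.le

lemma integrableOn_sq_mul_of_integrableOn_sq_mul_pow_three (hw : 0 ≤ w)
    (hwm : AEStronglyMeasurable w (volume.restrict (Ioc 0 r)))
    (hw3 : IntegrableOn (fun s ↦ s ^ 2 * w s ^ 3) (Ioc 0 r)) :
    IntegrableOn (fun s ↦ s ^ 2 * w s) (Ioc 0 r) := by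
  refine Integrable.mono' ((continuous_pow 2).integrableOn_Ioc.add hw3)
    ((continuous_pow 2).aestronglyMeasurable.mul hwm) ?_
  filter_upwards with s
  rw [Real.norm_of_nonneg (mul_nonneg (sq_nonneg s) (hw s))]
  have := mul_le_mul_of_nonneg_left (le_add_pow_three_div_sq one_pos (hw s)) (sq_nonneg s)
  simp only [Pi.add_apply]
  linarith

lemma setIntegral_sq_eq (hr : 0 ≤ r) : ∫ s in Ioc 0 r, s ^ 2 = r ^ 3 / 3 := by
  rw [← intervalIntegral.integral_of_le hr, integral_pow]
  norm_num

lemma setIntegral_sq_mul_le_of_le_pow_three {A : ℝ} (hr : 0 < r) (hA : 0 ≤ A) (hw : 0 ≤ w)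
    (hwm : AEStronglyMeasurable w (volume.restrict (Ioc 0 r)))
    (hw3 : IntegrableOn (fun s ↦ s ^ 2 * w s ^ 3) (Ioc 0 r))
    (hJ : ∫ s in Ioc 0 r, s ^ 2 * w s ^ 3 ≤ A ^ 3) :
    ∫ s in Ioc 0 r, s ^ 2 * w s ≤ 4 / 3 * A * r ^ 2 := by
  have hYoung : ∀ K > 0, ∫ s in Ioc 0 r, s ^ 2 * w s ≤ K * (r ^ 3 / 3) + A ^ 3 / K ^ 2 := by
    intro K hK
    have hK2 : IntegrableOn (fun s : ℝ ↦ K * s ^ 2) (Ioc 0 r) :=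
      (continuous_const.mul (continuous_pow 2)).integrableOn_Ioc
    have hK3 : IntegrableOn (fun s ↦ s ^ 2 * w s ^ 3 / K ^ 2) (Ioc 0 r) := hw3.div_const _
    calc ∫ s in Ioc 0 r, s ^ 2 * w s
        ≤ ∫ s in Ioc 0 r, (K * s ^ 2 + s ^ 2 * w s ^ 3 / K ^ 2) := by
          refine setIntegral_mono_on
            (integrableOn_sq_mul_of_integrableOn_sq_mul_pow_three hw hwm hw3)
            (hK2.add hK3) measurableSet_Ioc
            fun s _ ↦ ?_
          have := mul_le_mul_of_nonneg_left (le_add_pow_three_div_sq hK (hw s)) (sq_nonneg s)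
          linarith [mul_div_assoc (s ^ 2) (w s ^ 3) (K ^ 2)]
      _ = K * (r ^ 3 / 3) + (∫ s in Ioc 0 r, s ^ 2 * w s ^ 3) / K ^ 2 := by
          rw [integral_add hK2 hK3,
            integral_const_mul, integral_div, setIntegral_sq_eq hr.le]
      _ ≤ K * (r ^ 3 / 3) + A ^ 3 / K ^ 2 := by gcongr
  -- Optimising over `K` would give `K = A / r`; perturbing it keeps `K > 0` when `A = 0`.
  refine le_of_forall_pos_le_add fun ε hε ↦ ?_
  set K := A / r + 3 * ε / r ^ 3
  have hK : 0 < K := by positivity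
  have hKr : A ≤ K * r := by
    simp only [K, add_mul, div_mul_cancel₀ A hr.ne']
    have : 0 ≤ 3 * ε / r ^ 3 * r := by positivity
    linarith
  have hAK : A ^ 3 / K ^ 2 ≤ A * r ^ 2 := by
    rw [div_le_iff₀ (by positivity)]
    nlinarith [mul_le_mul_of_nonneg_left (pow_le_pow_left₀ hA hKr 2) hA]
  have hKval : K * (r ^ 3 / 3) = A * r ^ 2 / 3 + ε := by
    simp only [K]
    field_simp
  linarith [hYoung K hK]

lemma tendsto_nhdsGT_of_hasDerivAt_of_intervalIntegrable {F : Type*} [NormedAddCommGroup F]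
    [NormedSpace ℝ F] [CompleteSpace F] {g g' : ℝ → F} {a b : ℝ} (hab : a < b)
    (hderiv : ∀ x ∈ Ioc a b, HasDerivAt g (g' x) x) (hint : IntervalIntegrable g' volume a b) :
    Tendsto g (𝓝[>] a) (𝓝 (g b - ∫ x in a..b, g' x)) := by
  have hprim : ContinuousWithinAt (fun x ↦ g b - ∫ t in x..b, g' t) (Icc a b) a := by
    rw [← uIcc_of_le hab.le]
    exact (continuousOn_const.sub (intervalIntegral.continuousOn_primitive_interval_left
      ((intervalIntegrable_iff' (μ := volume)).1 hint))) a left_mem_uIcc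
  rw [← nhdsWithin_Ioc_eq_nhdsGT hab]
  refine (hprim.tendsto.mono_left (nhdsWithin_mono _ Ioc_subset_Icc_self)).congr' ?_
  filter_upwards [self_mem_nhdsWithin] with x hx
  have hsub : uIcc x b ⊆ Ioc a b := by
    rw [uIcc_of_le hx.2]
    exact Icc_subset_Ioc_iff hx.2 |>.2 ⟨hx.1, le_rfl⟩
  rw [intervalIntegral.integral_eq_sub_of_hasDerivAt (fun y hy ↦ hderiv y (hsub hy))
    (hint.mono_set (by rw [uIcc_of_le hab.le]; exact hsub.trans Ioc_subset_Icc_self)),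
    sub_sub_cancel]

lemma mul_deriv_sub_eq_integral_mul {m m' m'' : ℝ → ℝ} {r : ℝ} (hr : 0 < r)
    (hm : ∀ s ∈ Ioc 0 r, HasDerivAt m (m' s) s)
    (hm' : ∀ s ∈ Ioc 0 r, HasDerivAt m' (m'' s) s)
    (hint : IntervalIntegrable m'' volume 0 r) (hm0 : Tendsto m (𝓝[>] 0) (𝓝 0)) :
    r * m' r - m r = ∫ s in 0..r, s * m'' s := by
  have hG : ∀ s ∈ Ioc 0 r, HasDerivAt (fun t ↦ t * m' t - m t) (s * m'' s) s := fun s hs ↦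
    (((hasDerivAt_id' s).mul (hm' s hs)).sub (hm s hs)).congr_deriv (by ring)
  have hG0 : Tendsto (fun t ↦ t * m' t - m t) (𝓝[>] 0) (𝓝 0) := by
    simpa using ((tendsto_nhdsWithin_of_tendsto_nhds tendsto_id).mul
      (tendsto_nhdsGT_of_hasDerivAt_of_intervalIntegrable hr hm' hint)).sub hm0
  rw [intervalIntegral.integral_eq_sub_of_hasDerivAt_of_tendsto hr
    (fun s hs ↦ hG s (Ioo_subset_Ioc_self hs)) (hint.continuousOn_mul continuousOn_id) hG0
    ((hG r ⟨hr, le_rfl⟩).continuousAt.tendsto.mono_left nhdsWithin_le_nhds), sub_zero]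

lemma eq_div_sq_of_hasDerivAt_mul_self {f : ℝ → ℝ} {f' m' r : ℝ} (hr : r ≠ 0)
    (hf : HasDerivAt f f' r) (hm : HasDerivAt (fun t ↦ t * f t) m' r) :
    f' = (m' * r - r * f r) / r ^ 2 := by
  rw [hm.unique ((hasDerivAt_id' r).mul hf)]
  field_simp
  ring

lemma abs_half_mul_sub_mul_le {v m lam s : ℝ} (hlam : 0 ≤ lam) (hm : 0 ≤ m) (hms : m ≤ s) :
    |1 / 2 * v * m - lam * m| ≤ 1 / 2 * (s * |v|) + lam * s :=
  calc |1 / 2 * v * m - lam * m| ≤ |1 / 2 * v * m| + |lam * m| := abs_sub _ _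
    _ = 1 / 2 * (m * |v|) + lam * m := by
        simp only [abs_mul, abs_of_nonneg hm, abs_of_nonneg hlam,
          abs_of_nonneg (by norm_num : (0 : ℝ) ≤ 1 / 2)]
        ring
    _ ≤ 1 / 2 * (s * |v|) + lam * s := by gcongr

lemma tendsto_mul_nhdsGT_zero_of_mem_Icc {f : ℝ → ℝ} {L : ℝ} (hL : 0 < L)
    (hf : ∀ t ∈ Ioc 0 L, f t ∈ Icc 0 1) :
    Tendsto (fun t ↦ t * f t) (𝓝[>] 0) (𝓝 0) := by
  refine (tendsto_nhdsWithin_of_tendsto_nhds tendsto_id).zero_mul_isBoundedUnder_le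
    (isBoundedUnder_of_eventually_le (a := 1) ?_)
  filter_upwards [Ioc_mem_nhdsGT hL] with t ht
  obtain ⟨h0, h1⟩ := hf t ht
  simpa [abs_of_nonneg h0] using h1

section ScatteringEquation

variable {Vr f mder : ℝ → ℝ} {lam r : ℝ}

lemma intervalIntegrable_scatteringTerm (hr : 0 ≤ r) (hlam : 0 ≤ lam)
    (hf : ∀ s ∈ Ioc 0 r, f s ∈ Icc 0 1)
    (hfc : ContinuousOn f (Ioc 0 r)) (hVm : AEStronglyMeasurable Vr (volume.restrict (Ioc 0 r)))
    (hV3 : IntegrableOn (fun s ↦ s ^ 2 * |Vr s| ^ 3) (Ioc 0 r)) :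
    IntervalIntegrable (fun s ↦ 1 / 2 * Vr s * (s * f s) - lam * (s * f s)) volume 0 r := by
  rw [intervalIntegrable_iff_integrableOn_Ioc_of_le hr]
  have hsf : AEStronglyMeasurable (fun s ↦ s * f s) (volume.restrict (Ioc 0 r)) :=
    aestronglyMeasurable_id.mul (hfc.aestronglyMeasurable measurableSet_Ioc)
  have hlin : IntegrableOn (fun s : ℝ ↦ lam * s) (Ioc 0 r) :=
    (continuous_const.mul continuous_id).integrableOn_Ioc
  refine Integrable.mono'
    (((integrableOn_mul_of_integrableOn_sq_mul_pow_three (fun s ↦ abs_nonneg (Vr s))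
      (continuous_abs.comp_aestronglyMeasurable hVm) hV3).const_mul (1 / 2)).add hlin)
    (((hVm.const_mul (1 / 2)).mul hsf).sub (hsf.const_mul lam)) ?_
  filter_upwards [ae_restrict_mem measurableSet_Ioc] with s hs
  obtain ⟨hf0, hf1⟩ := hf s hs
  exact abs_half_mul_sub_mul_le (v := Vr s) hlam (mul_nonneg hs.1.le hf0)
    (mul_le_of_le_one_right hs.1.le hf1)

lemma abs_integral_mul_scatteringTerm_le (hr : 0 ≤ r) (hlam : 0 ≤ lam)
    (hf : ∀ s ∈ Ioc 0 r, f s ∈ Icc 0 1) (hfc : ContinuousOn f (Ioc 0 r))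
    (hVm : AEStronglyMeasurable Vr (volume.restrict (Ioc 0 r)))
    (hV3 : IntegrableOn (fun s ↦ s ^ 2 * |Vr s| ^ 3) (Ioc 0 r)) :
    |∫ s in 0..r, s * (1 / 2 * Vr s * (s * f s) - lam * (s * f s))| ≤
      1 / 2 * (∫ s in Ioc 0 r, s ^ 2 * |Vr s|) + lam * (r ^ 3 / 3) := by
  have hq := (intervalIntegrable_scatteringTerm hr hlam hf hfc hVm hV3).continuousOn_mul
    continuousOn_id
  have hsq : IntegrableOn (fun s ↦ s ^ 2 * |Vr s|) (Ioc 0 r) :=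
    integrableOn_sq_mul_of_integrableOn_sq_mul_pow_three (fun s ↦ abs_nonneg (Vr s))
      (continuous_abs.comp_aestronglyMeasurable hVm) hV3
  have hlam2 : IntegrableOn (fun s : ℝ ↦ lam * s ^ 2) (Ioc 0 r) :=
    (continuous_const.mul (continuous_pow 2)).integrableOn_Ioc
  have hbound : IntegrableOn (fun s ↦ 1 / 2 * (s ^ 2 * |Vr s|) + lam * s ^ 2) (Ioc 0 r) :=
    (hsq.const_mul _).add hlam2
  rw [intervalIntegral.integral_of_le hr]
  calc |∫ s in Ioc 0 r, s * (1 / 2 * Vr s * (s * f s) - lam * (s * f s))|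
      ≤ ∫ s in Ioc 0 r, |s * (1 / 2 * Vr s * (s * f s) - lam * (s * f s))| :=
        abs_integral_le_integral_abs
    _ ≤ ∫ s in Ioc 0 r, (1 / 2 * (s ^ 2 * |Vr s|) + lam * s ^ 2) := by
        refine setIntegral_mono_on ?_ hbound measurableSet_Ioc fun s hs ↦ ?_
        · exact hq.1.abs
        · obtain ⟨hf0, hf1⟩ := hf s hs
          rw [abs_mul, abs_of_pos hs.1]
          have := mul_le_mul_of_nonneg_left (abs_half_mul_sub_mul_le (v := Vr s) hlam
            (mul_nonneg hs.1.le hf0) (mul_le_of_le_one_right hs.1.le hf1)) hs.1.le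
          linarith
    _ = 1 / 2 * (∫ s in Ioc 0 r, s ^ 2 * |Vr s|) + lam * (r ^ 3 / 3) := by
        rw [integral_add (hsq.const_mul _) hlam2,
          integral_const_mul, integral_const_mul, setIntegral_sq_eq hr]

lemma abs_integral_mul_scatteringTerm_le_of_le_pow_three {A : ℝ} (hr : 0 < r) (hlam : 0 ≤ lam)
    (hA : 0 ≤ A) (hf : ∀ s ∈ Ioc 0 r, f s ∈ Icc 0 1) (hfc : ContinuousOn f (Ioc 0 r))
    (hVm : AEStronglyMeasurable Vr (volume.restrict (Ioc 0 r)))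
    (hV3 : IntegrableOn (fun s ↦ s ^ 2 * |Vr s| ^ 3) (Ioc 0 r))
    (hJ : ∫ s in Ioc 0 r, s ^ 2 * |Vr s| ^ 3 ≤ A ^ 3) :
    |∫ s in 0..r, s * (1 / 2 * Vr s * (s * f s) - lam * (s * f s))| ≤
      2 / 3 * A * r ^ 2 + lam * (r ^ 3 / 3) := by
  have := setIntegral_sq_mul_le_of_le_pow_three hr hA (fun s ↦ abs_nonneg (Vr s))
    (continuous_abs.comp_aestronglyMeasurable hVm) hV3 hJ
  linarith [abs_integral_mul_scatteringTerm_le hr.le hlam hf hfc hVm hV3]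

lemma mul_deriv_sub_eq_integral_scatteringTerm (hr : 0 < r) (hlam : 0 ≤ lam)
    (hf : ∀ s ∈ Ioc 0 r, f s ∈ Icc 0 1) (hfc : ContinuousOn f (Ioc 0 r))
    (hVm : AEStronglyMeasurable Vr (volume.restrict (Ioc 0 r)))
    (hV3 : IntegrableOn (fun s ↦ s ^ 2 * |Vr s| ^ 3) (Ioc 0 r))
    (hmder : ∀ s ∈ Ioc 0 r, HasDerivAt (fun t ↦ t * f t) (mder s) s)
    (hODE : ∀ s ∈ Ioc 0 r, HasDerivAt mder (1 / 2 * Vr s * (s * f s) - lam * (s * f s)) s) :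
    r * mder r - r * f r = ∫ s in 0..r, s * (1 / 2 * Vr s * (s * f s) - lam * (s * f s)) :=
  mul_deriv_sub_eq_integral_mul hr hmder hODE
    (intervalIntegrable_scatteringTerm hr.le hlam hf hfc hVm hV3)
    (tendsto_mul_nhdsGT_zero_of_mem_Icc hr hf)

end ScatteringEquation

theorem stmt14_general (V : EuclideanSpace ℝ (Fin 3) → ℝ) (Vr : ℝ → ℝ)
    (f f' mder : ℝ → ℝ) (R L lam : ℝ)
    (hR : 0 < R) (hRL : R ≤ L) (hlam : 0 ≤ lam)
    (hVmeas : Measurable V)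
    (hVrad : ∀ x, V x = Vr ‖x‖)
    (hV3 : MemLp V 3 volume)
    (hf01 : ∀ r ∈ Set.Ioc (0:ℝ) L, f r ∈ Set.Icc (0:ℝ) 1)
    (hfder : ∀ r ∈ Set.Ioc (0:ℝ) L, HasDerivAt f (f' r) r)
    (hmder : ∀ r ∈ Set.Ioc (0:ℝ) L, HasDerivAt (fun t => t * f t) (mder r) r)
    (hODE : ∀ r ∈ Set.Ioc (0:ℝ) L,
      HasDerivAt mder ((1/2) * Vr r * (r * f r) - lam * (r * f r)) r) :
    ∃ C > 0, ∀ r ∈ Set.Ioc (0:ℝ) R,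
      f' r = (mder r * r - r * f r) / r ^ 2 ∧
      |f' r| = (1 / r ^ 2) *
        |∫ s in (0:ℝ)..r, s * ((1/2) * Vr s * (s * f s) - lam * (s * f s))| ∧
      |f' r| ≤ C * ((eLpNorm V 3 volume).toReal + lam) := by
  set N := (eLpNorm V 3 volume).toReal
  have hN : 0 ≤ N := ENNReal.toReal_nonneg
  have hc := radialL3Const_pos
  refine ⟨2 / 3 * radialL3Const + R / 3, by positivity, fun r ⟨hr, hrR⟩ ↦ ?_⟩
  have hrL : Ioc 0 r ⊆ Ioc 0 L := Ioc_subset_Ioc_right (hrR.trans hRL)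
  have hfr : ∀ s ∈ Ioc 0 r, f s ∈ Icc 0 1 := fun s hs ↦ hf01 s (hrL hs)
  have hfc : ContinuousOn f (Ioc 0 r) := fun s hs ↦
    (hfder s (hrL hs)).continuousAt.continuousWithinAt
  have hsub : Ioc 0 r ⊆ Ioi 0 := Ioc_subset_Ioi_self
  have hVm := (aestronglyMeasurable_radialProfile hVmeas hVrad).mono_measure
    (Measure.restrict_mono hsub le_rfl)
  have hV3r := (integrableOn_sq_mul_abs_pow_three_of_memLp hVrad hV3).mono_set hsub
  have hf' := eq_div_sq_of_hasDerivAt_mul_self hr.ne' (hfder r (hrL ⟨hr, le_rfl⟩))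
    (hmder r (hrL ⟨hr, le_rfl⟩))
  have hIBP := mul_deriv_sub_eq_integral_scatteringTerm hr hlam hfr hfc hVm hV3r
    (fun s hs ↦ hmder s (hrL hs)) (fun s hs ↦ hODE s (hrL hs))
  have habs : |f' r| = 1 / r ^ 2 *
      |∫ s in (0:ℝ)..r, s * ((1/2) * Vr s * (s * f s) - lam * (s * f s))| := by
    rw [hf', ← hIBP, abs_div, abs_of_pos (by positivity : 0 < r ^ 2)]
    ring_nf
  refine ⟨hf', habs, ?_⟩
  calc |f' r| ≤ 1 / r ^ 2 * (2 / 3 * (radialL3Const * N) * r ^ 2 + lam * (r ^ 3 / 3)) := by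
        rw [habs]
        gcongr
        exact abs_integral_mul_scatteringTerm_le_of_le_pow_three hr hlam (by positivity) hfr hfc
          hVm hV3r (setIntegral_sq_mul_abs_pow_three_le hVrad hV3 r)
    _ = 2 / 3 * radialL3Const * N + lam * r / 3 := by field_simp
    _ ≤ (2 / 3 * radialL3Const + R / 3) * (N + lam) := by
        nlinarith [mul_le_mul_of_nonneg_left hrR hlam, mul_nonneg hc.le hN, mul_nonneg hR.le hN]

/-- Let `V ∈ L³(ℝ³)` be nonnegative, radial (with radial profile `Vr`),
supported in `{|x| ≤ R}`, and let `0 ≤ f ≤ 1` solve the scattering-type equation: with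
`m(r) = r f(r)`, `−m'' + ½ V m = λ m` on `(0, L]`. Then for `r ∈ (0, R]`,
`f'(r) = (m'(r) r − m(r))/r² = (1/r²) ∫₀^r s m''(s) ds` and
`|f'(r)| ≤ C (‖V‖₃ + λ)` for a constant `C` independent of `r`. -/
theorem stmt14 (V : EuclideanSpace ℝ (Fin 3) → ℝ) (Vr : ℝ → ℝ)
    (f f' mder : ℝ → ℝ) (R L lam : ℝ)
    (hR : 0 < R) (hRL : R ≤ L) (hlam : 0 ≤ lam)
    (hVmeas : Measurable V) (hVpos : ∀ x, 0 ≤ V x)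
    (hVrad : ∀ x, V x = Vr ‖x‖)
    (hVsupp : ∀ x : EuclideanSpace ℝ (Fin 3), R < ‖x‖ → V x = 0)
    (hV3 : MemLp V 3 volume)
    (hf01 : ∀ r ∈ Set.Ioc (0:ℝ) L, f r ∈ Set.Icc (0:ℝ) 1)
    (hfder : ∀ r ∈ Set.Ioc (0:ℝ) L, HasDerivAt f (f' r) r)
    (hmder : ∀ r ∈ Set.Ioc (0:ℝ) L, HasDerivAt (fun t => t * f t) (mder r) r)
    (hODE : ∀ r ∈ Set.Ioc (0:ℝ) L,
      HasDerivAt mder ((1/2) * Vr r * (r * f r) - lam * (r * f r)) r) :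
    ∃ C > 0, ∀ r ∈ Set.Ioc (0:ℝ) R,
      f' r = (mder r * r - r * f r) / r ^ 2 ∧
      |f' r| = (1 / r ^ 2) *
        |∫ s in (0:ℝ)..r, s * ((1/2) * Vr s * (s * f s) - lam * (s * f s))| ∧
      |f' r| ≤ C * ((eLpNorm V 3 volume).toReal + lam) :=
  stmt14_general V Vr f f' mder R L lam hR hRL hlam hVmeas hVrad hV3 hf01 hfder hmder hODE
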